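/- arXiv:2409.19103 — 3 statements merged into one kernel-verified Lean document; each statement's English description precedes it below -/
import Mathlib

section
/- Let N : ℕ → ℝ be a sequence with N(1) = 2 and N(k) ≥ 20·N(k−1) for all k ≥ 2. Then the series ∑_{k=1}^∞ 2·N(k)^k / ((2·N(k))^{2k} + log 8) converges and its sum is at most 1/4. -/
/-- If `N 1 = 2` and `N k ≥ 20 · N (k-1)` for `k ≥ 2`, then the series
`∑_{k=1}^∞ 2 N(k)^k / ((2 N(k))^{2k} + log 8)` converges with sum at most `1/4`.
Note `(2·N(k))^{2k} + log 8 = log (8 · exp ((2·N(k))^{2k}))`. -/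
theorem series_capacity_estimate (N : ℕ → ℝ) (hN1 : N 1 = 2)
    (hN : ∀ k : ℕ, 2 ≤ k → 20 * N (k - 1) ≤ N k) :
    Summable (fun k : ℕ =>
      2 * N (k + 1) ^ (k + 1) / ((2 * N (k + 1)) ^ (2 * (k + 1)) + Real.log 8)) ∧
    (∑' k : ℕ,
      2 * N (k + 1) ^ (k + 1) / ((2 * N (k + 1)) ^ (2 * (k + 1)) + Real.log 8)) ≤ 1 / 4 := by
  have hlog2 : (2 : ℝ) ≤ Real.log 8 := by
    rw [Real.le_log_iff_exp_le (by norm_num)]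
    have h := Real.exp_one_lt_d9
    have h2 : Real.exp 2 = Real.exp 1 * Real.exp 1 := by
      rw [← Real.exp_add]; norm_num
    nlinarith [Real.exp_pos 1]
  have hlogpos : (0 : ℝ) < Real.log 8 := lt_of_lt_of_le (by norm_num) hlog2
  have hNk : ∀ k : ℕ, 2 * 20 ^ k ≤ N (k + 1) := by
    intro k
    induction k with
    | zero => simp [hN1]
    | succ n ih =>
      have h := hN (n + 2) (by omega)
      calc (2 : ℝ) * 20 ^ (n + 1) = 20 * (2 * 20 ^ n) := by ring
        _ ≤ 20 * N (n + 1) := by nlinarith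
        _ ≤ N (n + 2) := h
  have hNpos : ∀ k : ℕ, 0 < N (k + 1) := fun k =>
    lt_of_lt_of_le (by positivity) (hNk k)
  set f := fun k : ℕ =>
      2 * N (k + 1) ^ (k + 1) / ((2 * N (k + 1)) ^ (2 * (k + 1)) + Real.log 8) with hf
  have hdenpos : ∀ n : ℕ, 0 < (2 * N (n + 1)) ^ (2 * (n + 1)) + Real.log 8 := by
    intro n
    have := hNpos n
    positivity
  have hfnonneg : ∀ n, 0 ≤ f n := by
    intro n
    have := hNpos n
    have := hdenpos n
    positivity
  have hfle : ∀ n, f n ≤ (2 / 9 : ℝ) * (1 / 160) ^ n := by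
    intro n
    match n with
    | 0 =>
      simp only [hf, hN1]
      have h16 : ((2 : ℝ) * 2) ^ (2 * (0 + 1)) = 16 := by norm_num
      rw [h16, div_le_iff₀ (by linarith)]
      nlinarith
    | (j + 1) =>
      have hNv : (40 : ℝ) ≤ N (j + 2) := by
        have := hNk (j + 1)
        have h20 : (20 : ℝ) ≤ 20 ^ (j + 1) := by
          calc (20 : ℝ) = 20 ^ 1 := by norm_num
            _ ≤ 20 ^ (j + 1) := by
              apply pow_le_pow_right₀ (by norm_num) (by omega)
        nlinarith
      set Nv := N (j + 2) with hNvdef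
      have hNvpos : 0 < Nv := hNpos (j + 1)
      have step1 : f (j + 1) ≤ 2 * Nv ^ (j + 2) / (2 * Nv) ^ (2 * (j + 2)) := by
        apply div_le_div_of_nonneg_left (by positivity) (by positivity)
        nlinarith [pow_pos (by linarith : (0:ℝ) < 2 * Nv) (2 * (j + 2))]
      have step2 : 2 * Nv ^ (j + 2) / (2 * Nv) ^ (2 * (j + 2)) = 2 / (4 * Nv) ^ (j + 2) := by
        have e : (2 * Nv) ^ (2 * (j + 2)) = (4 * Nv) ^ (j + 2) * Nv ^ (j + 2) := by
          rw [pow_mul, show ((2 * Nv) ^ 2) = (4 * Nv) * Nv by ring, mul_pow]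
        rw [e, mul_comm ((4 * Nv) ^ (j + 2)), mul_comm 2 (Nv ^ (j + 2)),
          mul_div_mul_left _ _ (pow_ne_zero _ (ne_of_gt hNvpos))]
      have step3 : 2 / (4 * Nv) ^ (j + 2) ≤ 2 / (160 : ℝ) ^ (j + 2) := by
        apply div_le_div_of_nonneg_left (by norm_num) (by positivity)
        apply pow_le_pow_left₀ (by norm_num) (by linarith)
      have step4 : 2 / (160 : ℝ) ^ (j + 2) ≤ (2 / 9) * (1 / 160) ^ (j + 1) := by
        have h160 : (0 : ℝ) < 160 ^ (j + 1) := by positivity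
        have e : (2 / 9 : ℝ) * (1 / 160) ^ (j + 1) = 2 / (9 * 160 ^ (j + 1)) := by
          rw [div_pow, one_pow]; field_simp
        rw [e]
        apply div_le_div_of_nonneg_left (by norm_num) (by positivity)
        calc (9 : ℝ) * 160 ^ (j + 1) ≤ 160 * 160 ^ (j + 1) := by nlinarith
          _ = 160 ^ (j + 2) := by rw [pow_succ]; ring
      calc f (j + 1) ≤ 2 * Nv ^ (j + 2) / (2 * Nv) ^ (2 * (j + 2)) := step1
        _ = 2 / (4 * Nv) ^ (j + 2) := step2
        _ ≤ 2 / (160 : ℝ) ^ (j + 2) := step3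
        _ ≤ (2 / 9) * (1 / 160) ^ (j + 1) := step4
  have hg : Summable (fun n : ℕ => (2 / 9 : ℝ) * (1 / 160) ^ n) :=
    (summable_geometric_of_lt_one (by norm_num) (by norm_num)).mul_left _
  have hsum : Summable f := Summable.of_nonneg_of_le hfnonneg hfle hg
  refine ⟨hsum, ?_⟩
  calc (∑' k, f k) ≤ ∑' n, (2 / 9 : ℝ) * (1 / 160) ^ n := Summable.tsum_le_tsum hfle hsum hg
    _ = (2 / 9) * (1 - 1 / 160)⁻¹ := by
        rw [tsum_mul_left, tsum_geometric_of_lt_one (by norm_num) (by norm_num)]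
    _ ≤ 1 / 4 := by norm_num
end

section
/- Let G ⊆ ℂ be open, let h : G → ℂ be a topological embedding (a homeomorphism onto its image, which is open by invariance of domain), let z₀ ∈ G, let V ⊆ ℂ be open with h(G) ⊆ V, and let φ : V → ℂ be holomorphic and injective. Then the eccentric distortions satisfy E_{φ∘h}(z₀) = E_h(z₀). -/
open Filter
open scoped ENNReal

/-- The eccentricity of a set `A ⊆ ℂ`:
`E(A) = inf {M ≥ 1 : ∃ open disk B with B ⊆ A ⊆ M·B}` (with `inf ∅ = ∞`),
where `M·B` is the disk with the same center as `B` and `M` times its radius. -/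
noncomputable def eccentricity (A : Set ℂ) : ℝ≥0∞ :=
  sInf {M : ℝ≥0∞ | ∃ Mr : ℝ, M = ENNReal.ofReal Mr ∧ 1 ≤ Mr ∧
    ∃ (z : ℂ) (ρ : ℝ), 0 < ρ ∧ Metric.ball z ρ ⊆ A ∧ A ⊆ Metric.ball z (Mr * ρ)}

/-- The eccentric distortion of `h` at `z₀ ∈ G`:
`E_h(z₀) = inf {M ≥ 1 :` there are open sets `A_k ⊆ G` containing `z₀` with
`diam (A_k) → 0`, `E(A_k) ≤ M` and `E(h(A_k)) ≤ M` for all `k}` (with `inf ∅ = ∞`). -/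
noncomputable def eccDistortion (G : Set ℂ) (h : ℂ → ℂ) (z₀ : ℂ) : ℝ≥0∞ :=
  sInf {M : ℝ≥0∞ | 1 ≤ M ∧ ∃ A : ℕ → Set ℂ,
    (∀ k, IsOpen (A k)) ∧ (∀ k, A k ⊆ G) ∧ (∀ k, z₀ ∈ A k) ∧
    Tendsto (fun k => EMetric.diam (A k)) atTop (nhds 0) ∧
    (∀ k, eccentricity (A k) ≤ M) ∧ (∀ k, eccentricity (h '' A k) ≤ M)}

/-! An injective holomorphic map `φ` has nonvanishing derivative `c` at `h z₀`. Near `h z₀` it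
is then `κ`-close to the similarity `w ↦ c w`, so it maps a set squeezed between concentric disks
of radii `ρ` and `Mρ` to one squeezed between disks of radii `(‖c‖ - κ) ρ` and `(‖c‖ + κ) M ρ`;
as `κ → 0` this gives `E_{φ∘h}(z₀) ≤ E_h(z₀)`. The reverse inequality is the same bound for the
local inverse of `φ`, since `h` agrees with `φ⁻¹ ∘ (φ ∘ h)` near `z₀`.

That `φ' ≠ 0` follows from the open mapping theorem and the removable singularity theorem: the
inverse of `φ` is continuous at `φ w₀` and holomorphic near it elsewhere (the zeros of `φ'` are
isolated), hence holomorphic at `φ w₀`, and differentiating `φ⁻¹ ∘ φ = id` rules out `φ' w₀ = 0`. -/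

open Metric Set Topology
open scoped NNReal

lemma ENNReal.le_of_forall_pos_le_ofReal_one_add_mul {x y : ℝ≥0∞}
    (h : ∀ ε > 0, x ≤ ENNReal.ofReal (1 + ε) * y) : x ≤ y := by
  have hlim : Tendsto (fun ε : ℝ => ENNReal.ofReal (1 + ε) * y) (𝓝[>] 0) (𝓝 y) := by
    have : Tendsto (fun ε : ℝ => ENNReal.ofReal (1 + ε)) (𝓝[>] 0) (𝓝 1) := by
      have hcont : Continuous fun ε : ℝ => 1 + ε := by fun_prop
      simpa using (ENNReal.tendsto_ofReal (hcont.tendsto 0)).mono_left nhdsWithin_le_nhds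
    simpa using ENNReal.Tendsto.mul_const this (Or.inl one_ne_zero)
  exact ge_of_tendsto hlim (eventually_nhdsWithin_of_forall h)

lemma tendsto_smallSets_nhds_of_ediam_tendsto_zero {X ι : Type*} [PseudoEMetricSpace X]
    {l : Filter ι} {A : ι → Set X} {x : X} (hx : ∀ i, x ∈ A i)
    (hdiam : Tendsto (fun i => ediam (A i)) l (𝓝 0)) :
    Tendsto A l (𝓝 x).smallSets := by
  refine tendsto_smallSets_iff.2 fun t ht => ?_
  obtain ⟨ε, hε, hεt⟩ := EMetric.mem_nhds_iff.1 ht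
  filter_upwards [hdiam.eventually_lt_const hε] with i hi y hy
  exact hεt ((edist_le_ediam_of_mem hy (hx i)).trans_lt hi)

lemma Set.InjOn.not_eventually_eq {X Y : Type*} [TopologicalSpace X] {f : X → Y} {s : Set X}
    (hinj : InjOn f s) {x : X} [(𝓝[≠] x).NeBot] (hs : s ∈ 𝓝 x) :
    ¬∀ᶠ y in 𝓝 x, f y = f x := fun hconst => by
  obtain ⟨y, ⟨hfy, hys⟩, hyx⟩ :=
    (((hconst.and hs).filter_mono nhdsWithin_le_nhds).and self_mem_nhdsWithin).exists (f := 𝓝[≠] x)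
  exact hyx (hinj hys (mem_of_mem_nhds hs) hfy)

lemma Set.InjOn.eventually_invFunOn_apply {X Y : Type*} [TopologicalSpace X] [Nonempty X]
    {f : X → Y} {s : Set X} (hinj : InjOn f s) {x : X} (hs : s ∈ 𝓝 x) :
    ∀ᶠ y in 𝓝 x, Function.invFunOn f s (f y) = y :=
  mem_of_superset hs fun _ hy => hinj.leftInvOn_invFunOn hy

lemma eccentricity_le_ofReal {A : Set ℂ} {z : ℂ} {ρ M : ℝ} (hρ : 0 < ρ) (hM : 1 ≤ M)
    (hinner : ball z ρ ⊆ A) (houter : A ⊆ ball z (M * ρ)) :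
    eccentricity A ≤ ENNReal.ofReal M :=
  sInf_le ⟨M, rfl, hM, z, ρ, hρ, hinner, houter⟩

lemma eccentricity_le_ofReal_mul {A B : Set ℂ} {t : ℝ} (ht : 0 < t)
    (h : ∀ (z : ℂ) (ρ M : ℝ), 0 < ρ → 1 ≤ M → ball z ρ ⊆ A → A ⊆ ball z (M * ρ) →
      eccentricity B ≤ ENNReal.ofReal (t * M)) :
    eccentricity B ≤ ENNReal.ofReal t * eccentricity A := by
  have ht₀ : ENNReal.ofReal t ≠ 0 := by simpa using ht
  rw [mul_comm, ← ENNReal.div_le_iff ht₀ ENNReal.ofReal_ne_top]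
  refine le_sInf ?_
  rintro _ ⟨M, rfl, hM, z, ρ, hρ, hinner, houter⟩
  rw [ENNReal.div_le_iff ht₀ ENNReal.ofReal_ne_top, ← ENNReal.ofReal_mul (by linarith), mul_comm]
  exact h z ρ M hρ hM hinner houter

section ApproximatesLinearOn

variable {𝕜 E F : Type*} [NontriviallyNormedField 𝕜] [NormedAddCommGroup E] [NormedSpace 𝕜 E]
  [NormedAddCommGroup F] [NormedSpace 𝕜 F] {f : E → F} {f' : E →L[𝕜] F} {s B : Set E} {κ : ℝ≥0}

lemma ApproximatesLinearOn.image_subset_ball (hf : ApproximatesLinearOn f f' s κ)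
    (hBs : B ⊆ s) {b : E} (hb : b ∈ s) {r : ℝ} (hBr : B ⊆ ball b r) (hpos : 0 < ‖f'‖ + κ) :
    f '' B ⊆ ball (f b) ((‖f'‖ + κ) * r) := by
  rintro _ ⟨x, hx, rfl⟩
  have hlip : LipschitzOnWith (‖f'‖₊ + κ) f s := lipschitzOnWith_iff_restrict.2 hf.lipschitz
  rw [mem_ball]
  calc dist (f x) (f b) ≤ (‖f'‖ + κ) * dist x b := by
        simpa using hlip.dist_le_mul x (hBs hx) b hb
    _ < (‖f'‖ + κ) * r := mul_lt_mul_of_pos_left (hBr hx) hpos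

lemma ApproximatesLinearOn.ball_subset_image_ball [CompleteSpace E]
    (hf : ApproximatesLinearOn f f' s κ) (f'symm : f'.NonlinearRightInverse)
    (hκ : κ < f'symm.nnnorm⁻¹) {b : E} {ρ : ℝ} (hρs : ball b ρ ⊆ s) :
    ball (f b) (((f'symm.nnnorm : ℝ)⁻¹ - κ) * ρ) ⊆ f '' ball b ρ := by
  intro y hy
  have hk : 0 < (f'symm.nnnorm : ℝ)⁻¹ - κ := by
    rw [sub_pos, ← NNReal.coe_inv, NNReal.coe_lt_coe]; exact hκ
  set ρ' := dist y (f b) / ((f'symm.nnnorm : ℝ)⁻¹ - κ)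
  have hρ' : ρ' < ρ := by rw [div_lt_iff₀ hk, mul_comm]; exact hy
  have hsub : closedBall b ρ' ⊆ ball b ρ := closedBall_subset_ball hρ'
  obtain ⟨x, hx, rfl⟩ := hf.surjOn_closedBall_of_nonlinearRightInverse f'symm
    (by positivity) (hsub.trans hρs) (by rw [mem_closedBall, mul_div_cancel₀ _ hk.ne'])
  exact mem_image_of_mem f (hsub hx)

end ApproximatesLinearOn

lemma ApproximatesLinearOn.eccentricity_image_le {φ : ℂ → ℂ} {c : ℂ} {s B : Set ℂ} {κ : ℝ≥0}
    (hφ : ApproximatesLinearOn φ (ContinuousLinearMap.toSpanSingleton ℂ c) s κ)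
    (hκ : κ < ‖c‖) (hBs : B ⊆ s) :
    eccentricity (φ '' B) ≤ ENNReal.ofReal ((‖c‖ + κ) / (‖c‖ - κ)) * eccentricity B := by
  have hc : c ≠ 0 := norm_pos_iff.1 (κ.2.trans_lt hκ)
  let inv : (ContinuousLinearMap.toSpanSingleton ℂ c).NonlinearRightInverse :=
    { toFun := fun y => y * c⁻¹
      nnnorm := ‖c‖₊⁻¹
      bound' := fun y => by simp [mul_comm]
      right_inv' := fun y => by simp [hc] }
  have hinv : ((inv.nnnorm : ℝ))⁻¹ = ‖c‖ := by simp [inv]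
  have hk : 0 < ‖c‖ - κ := sub_pos.2 hκ
  refine eccentricity_le_ofReal_mul (by positivity) fun z ρ M hρ hM hinner houter => ?_
  have himage_inner : ball (φ z) ((‖c‖ - κ) * ρ) ⊆ φ '' B := by
    rw [← hinv]
    refine (hφ.ball_subset_image_ball inv ?_ (hinner.trans hBs)).trans (image_mono hinner)
    rwa [← NNReal.coe_lt_coe, NNReal.coe_inv, hinv]
  have himage_outer : φ '' B ⊆ ball (φ z) ((‖c‖ + κ) * (M * ρ)) := by
    have hzs : z ∈ s := hBs (hinner (mem_ball_self hρ))
    simpa using hφ.image_subset_ball hBs hzs houter (by simp; positivity)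
  refine eccentricity_le_ofReal (mul_pos hk hρ) ?_ himage_inner ?_
  · exact one_le_mul_of_one_le_of_one_le ((one_le_div hk).2 (by linarith [κ.2])) hM
  · convert himage_outer using 2
    field_simp

lemma HasStrictDerivAt.eventually_eccentricity_image_le {φ : ℂ → ℂ} {c w₀ : ℂ}
    (hd : HasStrictDerivAt φ c w₀) (hc : c ≠ 0) {ε : ℝ} (hε : 0 < ε) :
    ∀ᶠ B in (𝓝 w₀).smallSets,
      eccentricity (φ '' B) ≤ ENNReal.ofReal (1 + ε) * eccentricity B := by
  have hc' : 0 < ‖c‖ := norm_pos_iff.2 hc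
  -- with this `κ`, the distortion factor `(‖c‖ + κ) / (‖c‖ - κ)` is exactly `1 + ε`
  set κ : ℝ≥0 := ⟨‖c‖ * ε / (2 + ε), by positivity⟩
  have hκ : (κ : ℝ) = ‖c‖ * ε / (2 + ε) := rfl
  have hκc : (κ : ℝ) < ‖c‖ := by
    rw [hκ, div_lt_iff₀ (by positivity)]; nlinarith
  obtain ⟨s, hs, hφs⟩ := hd.hasStrictFDerivAt.approximates_deriv_on_nhds
    (Or.inr (show 0 < κ from NNReal.coe_pos.1 (by rw [hκ]; positivity)))
  refine eventually_smallSets.2 ⟨s, hs, fun B hBs => ?_⟩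
  convert hφs.eccentricity_image_le hκc hBs using 3
  rw [hκ]; field_simp; ring

section InjectiveHolomorphic

open Function

variable {V : Set ℂ} {φ : ℂ → ℂ}

lemma eventually_deriv_ne_zero_of_injOn (hV : IsOpen V) (hφ : DifferentiableOn ℂ φ V)
    (hinj : InjOn φ V) {w₀ : ℂ} (hw₀ : w₀ ∈ V) :
    ∀ᶠ w in 𝓝[≠] w₀, deriv φ w ≠ 0 := by
  refine ((hφ.analyticOnNhd hV).deriv w₀ hw₀).eventually_eq_zero_or_eventually_ne_zero.resolve_left
    fun hzero => hinj.not_eventually_eq (hV.mem_nhds hw₀) ?_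
  obtain ⟨r, hr, hball⟩ := eventually_nhds_iff_ball.1 (hzero.and (hV.eventually_mem hw₀))
  filter_upwards [ball_mem_nhds w₀ hr] with z hz
  exact isOpen_ball.is_const_of_deriv_eq_zero (convex_ball w₀ r).isPreconnected
    (hφ.mono fun x hx => (hball x hx).2) (fun x hx => (hball x hx).1) hz (mem_ball_self hr)

lemma differentiableAt_invFunOn (hV : IsOpen V) (hφ : DifferentiableOn ℂ φ V)
    (hinj : InjOn φ V) {w : ℂ} (hw : w ∈ V) (hder : deriv φ w ≠ 0) :
    DifferentiableAt ℂ (invFunOn φ V) (φ w) :=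
  ((hφ.analyticAt (hV.mem_nhds hw)).hasStrictDerivAt.to_local_left_inverse hder
    (hinj.eventually_invFunOn_apply (hV.mem_nhds hw))).hasDerivAt.differentiableAt

lemma nhds_le_map_nhds_of_injOn (hV : IsOpen V) (hφ : DifferentiableOn ℂ φ V)
    (hinj : InjOn φ V) {w : ℂ} (hw : w ∈ V) : 𝓝 (φ w) ≤ map φ (𝓝 w) :=
  ((hφ.analyticAt (hV.mem_nhds hw)).eventually_constant_or_nhds_le_map_nhds).resolve_left
    (hinj.not_eventually_eq (hV.mem_nhds hw))

lemma continuousAt_invFunOn (hV : IsOpen V) (hφ : DifferentiableOn ℂ φ V)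
    (hinj : InjOn φ V) {w₀ : ℂ} (hw₀ : w₀ ∈ V) :
    ContinuousAt (invFunOn φ V) (φ w₀) :=
  calc map (invFunOn φ V) (𝓝 (φ w₀)) ≤ map (invFunOn φ V ∘ φ) (𝓝 w₀) := by
        rw [← map_map]; exact map_mono (nhds_le_map_nhds_of_injOn hV hφ hinj hw₀)
    _ = 𝓝 (invFunOn φ V (φ w₀)) := by
        rw [Filter.map_congr (m₁ := invFunOn φ V ∘ φ) (m₂ := id)
          (hinj.eventually_invFunOn_apply (hV.mem_nhds hw₀)), map_id, hinj.leftInvOn_invFunOn hw₀]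

lemma eventually_differentiableAt_invFunOn (hV : IsOpen V) (hφ : DifferentiableOn ℂ φ V)
    (hinj : InjOn φ V) {w₀ : ℂ} (hw₀ : w₀ ∈ V) :
    ∀ᶠ v in 𝓝[≠] (φ w₀), DifferentiableAt ℂ (invFunOn φ V) v := by
  refine eventually_nhdsWithin_iff.2
    (nhds_le_map_nhds_of_injOn hV hφ hinj hw₀ (eventually_map.2 ?_))
  filter_upwards [eventually_nhdsWithin_iff.1 (eventually_deriv_ne_zero_of_injOn hV hφ hinj hw₀),
    hV.eventually_mem hw₀] with w hder hw hne
  exact differentiableAt_invFunOn hV hφ hinj hw (hder (ne_of_apply_ne φ hne))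

theorem deriv_ne_zero_of_injOn (hV : IsOpen V) (hφ : DifferentiableOn ℂ φ V) (hinj : InjOn φ V)
    {w₀ : ℂ} (hw₀ : w₀ ∈ V) : deriv φ w₀ ≠ 0 := by
  intro hzero
  have hψ : AnalyticAt ℂ (invFunOn φ V) (φ w₀) :=
    Complex.analyticAt_of_differentiable_on_punctured_nhds_of_continuousAt
      (eventually_differentiableAt_invFunOn hV hφ hinj hw₀) (continuousAt_invFunOn hV hφ hinj hw₀)
  have hφ' : HasDerivAt φ 0 w₀ := hzero ▸ (hφ.differentiableAt (hV.mem_nhds hw₀)).hasDerivAt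
  have hcomp : HasDerivAt (invFunOn φ V ∘ φ) (deriv (invFunOn φ V) (φ w₀) * 0) w₀ :=
    hψ.differentiableAt.hasDerivAt.comp w₀ hφ'
  have hid : HasDerivAt (invFunOn φ V ∘ φ) 1 w₀ :=
    (hasDerivAt_id w₀).congr_of_eventuallyEq (hinj.eventually_invFunOn_apply (hV.mem_nhds hw₀))
  simpa using hcomp.unique hid

end InjectiveHolomorphic

section EccDistortion

variable {G : Set ℂ} {z₀ : ℂ}

lemma eccDistortion_le_of_eventually {h : ℂ → ℂ} {M : ℝ≥0∞} {A : ℕ → Set ℂ} (hM : 1 ≤ M)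
    (hA : ∀ k, IsOpen (A k)) (hAG : ∀ k, A k ⊆ G) (hz₀ : ∀ k, z₀ ∈ A k)
    (hdiam : Tendsto (fun k => ediam (A k)) atTop (𝓝 0))
    (hE : ∀ᶠ k in atTop, eccentricity (A k) ≤ M)
    (hEh : ∀ᶠ k in atTop, eccentricity (h '' A k) ≤ M) :
    eccDistortion G h z₀ ≤ M := by
  obtain ⟨N, hN⟩ := eventually_atTop.1 (hE.and hEh)
  exact sInf_le ⟨hM, fun k => A (k + N), fun k => hA _, fun k => hAG _, fun k => hz₀ _,
    hdiam.comp (tendsto_add_atTop_nat N), fun k => (hN _ (Nat.le_add_left N k)).1,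
    fun k => (hN _ (Nat.le_add_left N k)).2⟩

lemma tendsto_smallSets_nhdsWithin_of_ediam_tendsto_zero {A : ℕ → Set ℂ} (hAG : ∀ k, A k ⊆ G)
    (hz₀ : ∀ k, z₀ ∈ A k) (hdiam : Tendsto (fun k => ediam (A k)) atTop (𝓝 0)) :
    Tendsto A atTop (𝓝[G] z₀).smallSets := by
  rw [nhdsWithin, smallSets_inf, tendsto_inf, smallSets_principal, tendsto_principal]
  exact ⟨tendsto_smallSets_nhds_of_ediam_tendsto_zero hz₀ hdiam, Eventually.of_forall hAG⟩

lemma eccDistortion_le_of_eventuallyEq {h₁ h₂ : ℂ → ℂ} (heq : h₁ =ᶠ[𝓝[G] z₀] h₂) :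
    eccDistortion G h₁ z₀ ≤ eccDistortion G h₂ z₀ := by
  refine le_sInf fun M ⟨hM, A, hA, hAG, hz₀, hdiam, hE, hEh⟩ => ?_
  refine eccDistortion_le_of_eventually hM hA hAG hz₀ hdiam (Eventually.of_forall hE) ?_
  filter_upwards [(tendsto_smallSets_nhdsWithin_of_ediam_tendsto_zero hAG hz₀ hdiam).eventually
    heq.smallSets] with k hk
  rw [image_congr hk]
  exact hEh k

lemma eccDistortion_congr {h₁ h₂ : ℂ → ℂ} (heq : h₁ =ᶠ[𝓝[G] z₀] h₂) :
    eccDistortion G h₁ z₀ = eccDistortion G h₂ z₀ :=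
  (eccDistortion_le_of_eventuallyEq heq).antisymm (eccDistortion_le_of_eventuallyEq heq.symm)

lemma eccDistortion_comp_le {h φ : ℂ → ℂ} {c : ℂ} (hh : ContinuousWithinAt h G z₀)
    (hφ : HasStrictDerivAt φ c (h z₀)) (hc : c ≠ 0) :
    eccDistortion G (φ ∘ h) z₀ ≤ eccDistortion G h z₀ := by
  refine le_sInf fun M ⟨hM, A, hA, hAG, hz₀, hdiam, hE, hEh⟩ => ?_
  refine ENNReal.le_of_forall_pos_le_ofReal_one_add_mul fun ε hε => ?_
  have hfactor : 1 ≤ ENNReal.ofReal (1 + ε) := by simpa using hε.le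
  have hhA : Tendsto (fun k => h '' A k) atTop (𝓝 (h z₀)).smallSets :=
    hh.tendsto.image_smallSets.comp
      (tendsto_smallSets_nhdsWithin_of_ediam_tendsto_zero hAG hz₀ hdiam)
  refine eccDistortion_le_of_eventually (one_le_mul hfactor hM) hA hAG hz₀ hdiam
    (Eventually.of_forall fun k => (hE k).trans (le_mul_of_one_le_left' hfactor)) ?_
  filter_upwards [hhA.eventually (hφ.eventually_eccentricity_image_le hc hε)] with k hk
  rw [image_comp]
  exact hk.trans (by gcongr; exact hEh k)

end EccDistortion

theorem eccDistortion_comp_conformal_general (G : Set ℂ) (h : ℂ → ℂ)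
    (hcont : ContinuousOn h G)
    (z₀ : ℂ) (hz₀ : z₀ ∈ G)
    (V : Set ℂ) (hV : IsOpen V) (hGV : h '' G ⊆ V)
    (φ : ℂ → ℂ) (hφ : DifferentiableOn ℂ φ V) (hφinj : Set.InjOn φ V) :
    eccDistortion G (φ ∘ h) z₀ = eccDistortion G h z₀ := by
  have hw₀ : h z₀ ∈ V := hGV (mem_image_of_mem h hz₀)
  have hd : HasStrictDerivAt φ (deriv φ (h z₀)) (h z₀) :=
    (hφ.analyticAt (hV.mem_nhds hw₀)).hasStrictDerivAt
  have hc : deriv φ (h z₀) ≠ 0 := deriv_ne_zero_of_injOn hV hφ hφinj hw₀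
  have hh : ContinuousWithinAt h G z₀ := hcont.continuousWithinAt hz₀
  set ψ := hd.localInverse φ _ _ hc
  have hψφh : ψ ∘ φ ∘ h =ᶠ[𝓝[G] z₀] h := hh.tendsto.eventually (hd.eventually_left_inverse hc)
  refine le_antisymm (eccDistortion_comp_le hh hd hc) ?_
  calc eccDistortion G h z₀ = eccDistortion G (ψ ∘ φ ∘ h) z₀ := eccDistortion_congr hψφh.symm
    _ ≤ eccDistortion G (φ ∘ h) z₀ :=
      eccDistortion_comp_le (hd.hasDerivAt.continuousAt.comp_continuousWithinAt hh)
        (hd.to_localInverse hc) (inv_ne_zero hc)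

/-- Eccentric distortion is invariant under postcomposition with an injective holomorphic
map defined on an open set containing the image: if `G` is open, `h : G → ℂ` is a
topological embedding, `V ⊇ h(G)` is open and `φ : V → ℂ` is holomorphic and injective,
then `E_{φ∘h}(z₀) = E_h(z₀)` for every `z₀ ∈ G`. -/
theorem eccDistortion_comp_conformal (G : Set ℂ) (hG : IsOpen G) (h : ℂ → ℂ)
    (hcont : ContinuousOn h G) (hinj : Set.InjOn h G)
    (z₀ : ℂ) (hz₀ : z₀ ∈ G)
    (V : Set ℂ) (hV : IsOpen V) (hGV : h '' G ⊆ V)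
    (φ : ℂ → ℂ) (hφ : DifferentiableOn ℂ φ V) (hφinj : Set.InjOn φ V) :
    eccDistortion G (φ ∘ h) z₀ = eccDistortion G h z₀ :=
  eccDistortion_comp_conformal_general G h hcont z₀ hz₀ V hV hGV φ hφ hφinj
end

section
/- There exists a compact set S ⊆ ℂ with two-dimensional Lebesgue measure zero and a homeomorphism h : ℂ → ℂ such that h is holomorphic on ℂ \ S but h is not of the form h(z) = a·z + b for any a, b ∈ ℂ. That is, there exists a conformally non-removable compact set of Lebesgue measure zero. -/
/-!
Let `c` be the Cantor function and `B` the closed set of points near which `c` is not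
constant. The identity `c x = (c (3x) + c (3x - 2)) / 2` gives `B ⊆ B / 3 ∪ (B + 2) / 3`, so
`B` is Lebesgue-null. Rotating each circle `|z| = r` by the angle `c r` is a homeomorphism of
`ℂ`; near a circle whose radius is not in `B` it is a single rotation, hence holomorphic. It is
not affine, since it fixes `0` but rotates the circles of radius `1/2` and `1` by different
angles. The exceptional set, the union of the circles with radii in `B`, is compact and, by
polar coordinates, null.
-/

open MeasureTheory Filter Topology Complex

def nonLocallyConstantSet {X Y : Type*} [TopologicalSpace X] (f : X → Y) : Set X :=
  {x | ¬ ∀ᶠ y in 𝓝 x, f y = f x}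

section nonLocallyConstantSet

variable {X Y : Type*} [TopologicalSpace X]

theorem isClosed_nonLocallyConstantSet (f : X → Y) : IsClosed (nonLocallyConstantSet f) := by
  refine isOpen_compl_iff.mp (isOpen_iff_mem_nhds.mpr fun x hx => ?_)
  have hx : ∀ᶠ y in 𝓝 x, f y = f x := not_not.mp hx
  filter_upwards [hx.eventually_nhds] with y hy
  exact not_not.mpr (hy.mono fun w hw => hw.trans hy.self_of_nhds.symm)

theorem nonLocallyConstantSet_disjoint_of_eqOn_const {f : X → Y} {U : Set X} {c : Y}
    (hU : IsOpen U) (hf : Set.EqOn f (fun _ => c) U) :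
    Disjoint U (nonLocallyConstantSet f) :=
  Set.disjoint_left.mpr fun _ hx hnot =>
    hnot (Filter.mem_of_superset (hU.mem_nhds hx) fun _ hy => (hf hy).trans (hf hx).symm)

end nonLocallyConstantSet

theorem Real.volume_eq_zero_of_subset_preimage_affine {s : Set ℝ} (hs : volume s ≠ ⊤)
    {a b : ℝ} (ha : 2 < |a|) (hsub : s ⊆ (a * ·) ⁻¹' s ∪ (fun x => a * x - b) ⁻¹' s) :
    volume s = 0 := by
  have ha0 : a ≠ 0 := by rintro rfl; norm_num at ha
  have hpre : (fun x => a * x - b) ⁻¹' s = (a * ·) ⁻¹' ((· + -b) ⁻¹' s) := by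
    ext x; simp [sub_eq_add_neg]
  have hle : volume s ≤ ENNReal.ofReal (2 * |a⁻¹|) * volume s :=
    calc volume s ≤ volume ((a * ·) ⁻¹' s) + volume ((fun x => a * x - b) ⁻¹' s) :=
          (measure_mono hsub).trans (measure_union_le _ _)
      _ = ENNReal.ofReal (2 * |a⁻¹|) * volume s := by
          rw [hpre, Real.volume_preimage_mul_left ha0, Real.volume_preimage_mul_left ha0,
            measure_preimage_add_right, ← add_mul, ← ENNReal.ofReal_add (by positivity)
            (by positivity), two_mul]
  have hlt : 2 * |a⁻¹| < 1 := by
    rw [abs_inv, ← div_eq_mul_inv, div_lt_one (by linarith)]; exact ha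
  by_contra h0
  have hshrink := ENNReal.mul_lt_mul_left h0 hs (ENNReal.ofReal_lt_one.mpr hlt)
  rw [one_mul] at hshrink
  exact hshrink.not_ge hle

theorem Complex.volume_norm_preimage_eq_zero {K : Set ℝ} (hK : volume K = 0) :
    volume (norm ⁻¹' K : Set ℂ) = 0 := by
  wlog hKm : MeasurableSet K generalizing K
  · exact measure_mono_null (Set.preimage_mono (subset_toMeasurable volume K))
      (this (by rwa [measure_toMeasurable]) (measurableSet_toMeasurable _ _))
  have hfst : ∀ᵐ p : ℝ × ℝ, p.1 ∉ K :=
    Measure.quasiMeasurePreserving_fst.ae (measure_eq_zero_iff_ae_notMem.mp hK)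
  rw [← lintegral_indicator_one (hKm.preimage continuous_norm.measurable),
    ← Complex.lintegral_comp_polarCoord_symm]
  refine (lintegral_congr_ae ?_).trans lintegral_zero
  filter_upwards [ae_restrict_mem polarCoord.open_target.measurableSet,
    ae_restrict_of_ae hfst] with p hp hpK
  have hr : 0 < p.1 := hp.1
  simp [abs_of_pos hr, hpK]

theorem isCompact_norm_preimage {E : Type*} [NormedAddCommGroup E] [ProperSpace E]
    {K : Set ℝ} (hK : IsCompact K) : IsCompact (norm ⁻¹' K : Set E) := by
  obtain ⟨R, hR⟩ := hK.isBounded.subset_closedBall 0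
  refine Metric.isCompact_of_isClosed_isBounded (hK.isClosed.preimage continuous_norm)
    ((Metric.isBounded_closedBall (x := (0 : E)) (r := R)).subset fun z hz => ?_)
  simpa using hR hz

noncomputable def radialTwist (f : ℝ → ℝ) (hf : Continuous f) : ℂ ≃ₜ ℂ where
  toFun z := exp (f ‖z‖ * I) * z
  invFun z := exp (↑(-f ‖z‖) * I) * z
  left_inv z := by
    simp only [norm_mul, norm_exp_ofReal_mul_I, one_mul, ← mul_assoc, ← exp_add]
    simp
  right_inv z := by
    simp only [norm_mul, norm_exp_ofReal_mul_I, one_mul, ← mul_assoc, ← exp_add]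
    simp
  continuous_toFun := by fun_prop
  continuous_invFun := by fun_prop

section radialTwist

variable {f : ℝ → ℝ} (hf : Continuous f)

theorem radialTwist_apply (z : ℂ) : radialTwist f hf z = exp (f ‖z‖ * I) * z := rfl

theorem differentiableAt_radialTwist {z : ℂ} (hz : ‖z‖ ∉ nonLocallyConstantSet f) :
    DifferentiableAt ℂ (radialTwist f hf) z := by
  have hconst : ∀ᶠ w in 𝓝 z, f ‖w‖ = f ‖z‖ :=
    (continuous_norm.tendsto z).eventually (not_not.mp hz)
  have heq : radialTwist f hf =ᶠ[𝓝 z] fun w => exp (f ‖z‖ * I) * w := by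
    filter_upwards [hconst] with w hw
    rw [radialTwist_apply, hw]
  exact heq.differentiableAt_iff.mpr (differentiableAt_id.const_mul _)

theorem exp_eq_exp_of_radialTwist_eq_affine {a b : ℂ}
    (hab : ∀ z, radialTwist f hf z = a * z + b) {r : ℝ} (hr : 0 < r) :
    exp (f r * I) = a := by
  have hb : b = 0 := by simpa [radialTwist_apply] using (hab 0).symm
  have hr' : (r : ℂ) ≠ 0 := by exact_mod_cast hr.ne'
  have := hab r
  rw [radialTwist_apply, hb, add_zero, norm_real, Real.norm_of_nonneg hr.le] at this
  exact mul_right_cancel₀ hr' this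

end radialTwist

noncomputable def cantorApprox : ℕ → ℝ → ℝ
  | 0 => fun x => max 0 (min x 1)
  | n + 1 => fun x => (cantorApprox n (3 * x) + cantorApprox n (3 * x - 2)) / 2

namespace cantorApprox

theorem continuous : ∀ n, Continuous (cantorApprox n)
  | 0 => by unfold cantorApprox; fun_prop
  | n + 1 => by
    have := continuous n
    unfold cantorApprox; fun_prop

theorem eq_zero_of_nonpos : ∀ n, ∀ {x : ℝ}, x ≤ 0 → cantorApprox n x = 0
  | 0, x, hx => max_eq_left ((min_le_left x 1).trans hx)
  | n + 1, x, hx => by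
    simp only [cantorApprox, eq_zero_of_nonpos n (by linarith : 3 * x ≤ 0),
      eq_zero_of_nonpos n (by linarith : 3 * x - 2 ≤ 0)]
    norm_num

theorem eq_one_of_one_le : ∀ n, ∀ {x : ℝ}, 1 ≤ x → cantorApprox n x = 1
  | 0, x, hx => by simp [cantorApprox, min_eq_right hx]
  | n + 1, x, hx => by
    simp only [cantorApprox, eq_one_of_one_le n (by linarith : 1 ≤ 3 * x),
      eq_one_of_one_le n (by linarith : 1 ≤ 3 * x - 2)]
    norm_num

theorem mem_Icc : ∀ n x, cantorApprox n x ∈ Set.Icc (0 : ℝ) 1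
  | 0, x => ⟨le_max_left _ _, max_le zero_le_one (min_le_right _ _)⟩
  | n + 1, x => by
    obtain ⟨h₁, h₂⟩ := mem_Icc n (3 * x)
    obtain ⟨h₃, h₄⟩ := mem_Icc n (3 * x - 2)
    constructor <;> simp only [cantorApprox] <;> linarith

/-- Of the two arguments `3 * x`, `3 * x - 2` averaged in a step, at most one lies in `(0, 1)`;
at the other, all approximations agree. -/
theorem abs_succ_sub_le : ∀ n x, |cantorApprox (n + 1) x - cantorApprox n x| ≤ (1 / 2) ^ n
  | 0, x => by
    obtain ⟨h₁, h₂⟩ := mem_Icc 1 x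
    obtain ⟨h₃, h₄⟩ := mem_Icc 0 x
    rw [abs_le]; constructor <;> norm_num <;> linarith
  | n + 1, x => by
    set d := fun y => cantorApprox (n + 1) y - cantorApprox n y
    have hsplit : cantorApprox (n + 2) x - cantorApprox (n + 1) x
        = (d (3 * x) + d (3 * x - 2)) / 2 := by
      simp only [d, cantorApprox]; ring
    have hone : d (3 * x) = 0 ∨ d (3 * x - 2) = 0 := by
      rcases le_or_gt x (1 / 3) with hx | hx
      · right; simp only [d, eq_zero_of_nonpos _ (by linarith : 3 * x - 2 ≤ 0), sub_self]
      · left; simp only [d, eq_one_of_one_le _ (by linarith : 1 ≤ 3 * x), sub_self]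
    rw [hsplit, abs_div, abs_two, pow_succ]
    rcases hone with h | h <;> rw [h] <;> simp only [zero_add, add_zero] <;>
      linarith [abs_succ_sub_le n (3 * x), abs_succ_sub_le n (3 * x - 2)]

end cantorApprox

noncomputable def cantorFunction (x : ℝ) : ℝ :=
  cantorApprox 0 x + ∑' n, (cantorApprox (n + 1) x - cantorApprox n x)

namespace cantorFunction

theorem tendsto_cantorApprox (x : ℝ) :
    Tendsto (cantorApprox · x) atTop (𝓝 (cantorFunction x)) := by
  have hsum : Summable fun n => cantorApprox (n + 1) x - cantorApprox n x :=
    .of_norm_bounded summable_geometric_two (cantorApprox.abs_succ_sub_le · x)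
  have := (tendsto_const_nhds (x := cantorApprox 0 x)).add hsum.hasSum.tendsto_sum_nat
  simpa [cantorFunction, Finset.sum_range_sub (cantorApprox · x)] using this

theorem continuous : Continuous cantorFunction :=
  (cantorApprox.continuous 0).add <| continuous_tsum
    (fun n => (cantorApprox.continuous (n + 1)).sub (cantorApprox.continuous n))
    summable_geometric_two fun n x => cantorApprox.abs_succ_sub_le n x

theorem eq_zero_of_nonpos {x : ℝ} (hx : x ≤ 0) : cantorFunction x = 0 :=
  tendsto_nhds_unique (tendsto_cantorApprox x)
    (by simp only [cantorApprox.eq_zero_of_nonpos _ hx, tendsto_const_nhds])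

theorem eq_one_of_one_le {x : ℝ} (hx : 1 ≤ x) : cantorFunction x = 1 :=
  tendsto_nhds_unique (tendsto_cantorApprox x)
    (by simp only [cantorApprox.eq_one_of_one_le _ hx, tendsto_const_nhds])

theorem eq_average (x : ℝ) :
    cantorFunction x = (cantorFunction (3 * x) + cantorFunction (3 * x - 2)) / 2 :=
  tendsto_nhds_unique ((tendsto_cantorApprox x).comp (tendsto_add_atTop_nat 1))
    (((tendsto_cantorApprox _).add (tendsto_cantorApprox _)).div_const 2)

theorem half : cantorFunction (1 / 2) = 1 / 2 := by
  rw [eq_average, eq_one_of_one_le (by norm_num), eq_zero_of_nonpos (by norm_num)]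
  norm_num

theorem nonLocallyConstantSet_subset_Icc :
    nonLocallyConstantSet cantorFunction ⊆ Set.Icc 0 1 := by
  intro x hx
  by_contra hmem
  rcases not_and_or.mp hmem with h | h
  · exact Set.disjoint_left.mp (nonLocallyConstantSet_disjoint_of_eqOn_const isOpen_Iio
      fun y hy => eq_zero_of_nonpos (le_of_lt hy)) (not_le.mp h) hx
  · exact Set.disjoint_left.mp (nonLocallyConstantSet_disjoint_of_eqOn_const isOpen_Ioi
      fun y hy => eq_one_of_one_le (le_of_lt hy)) (not_le.mp h) hx

theorem nonLocallyConstantSet_subset_preimage :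
    nonLocallyConstantSet cantorFunction ⊆
      (3 * ·) ⁻¹' nonLocallyConstantSet cantorFunction ∪
        (fun x => 3 * x - 2) ⁻¹' nonLocallyConstantSet cantorFunction := by
  intro x hx
  by_contra hnot
  obtain ⟨h₁, h₂⟩ := not_or.mp hnot
  have hc₁ := ((continuous_const_mul 3).tendsto x).eventually (not_not.mp h₁)
  have hc₂ := ((by fun_prop : Continuous fun y : ℝ => 3 * y - 2).tendsto x).eventually
    (not_not.mp h₂)
  refine hx ?_
  filter_upwards [hc₁, hc₂] with y hy₁ hy₂
  rw [eq_average y, eq_average x, hy₁, hy₂]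

theorem volume_nonLocallyConstantSet : volume (nonLocallyConstantSet cantorFunction) = 0 :=
  Real.volume_eq_zero_of_subset_preimage_affine
    (measure_mono nonLocallyConstantSet_subset_Icc |>.trans_lt (by simp)).ne
    (by norm_num) nonLocallyConstantSet_subset_preimage

end cantorFunction

theorem not_exists_radialTwist_cantorFunction_eq_affine :
    ¬ ∃ a b : ℂ, ∀ z, radialTwist cantorFunction cantorFunction.continuous z = a * z + b := by
  rintro ⟨a, b, hab⟩
  have hexp := (exp_eq_exp_of_radialTwist_eq_affine _ hab one_half_pos).trans
    (exp_eq_exp_of_radialTwist_eq_affine _ hab one_pos).symm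
  rw [cantorFunction.half, cantorFunction.eq_one_of_one_le le_rfl] at hexp
  have hsin := congrArg Complex.im hexp
  simp only [exp_ofReal_mul_I_im] at hsin
  have hπ := Real.pi_gt_three
  have := Real.injOn_sin ⟨by linarith, by linarith⟩ ⟨by linarith, by linarith⟩ hsin
  norm_num at this

/-- There exists a conformally non-removable compact set of two-dimensional Lebesgue
measure zero: a compact `S ⊆ ℂ` with `volume S = 0` and a homeomorphism `h : ℂ → ℂ`
which is holomorphic on `ℂ \ S` but is not affine. -/
theorem exists_nonremovable_compact_null_set :
    ∃ S : Set ℂ, IsCompact S ∧ MeasureTheory.volume S = 0 ∧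
      ∃ h : ℂ ≃ₜ ℂ, (∀ z ∉ S, DifferentiableAt ℂ (⇑h) z) ∧
        ¬ ∃ a b : ℂ, ∀ z : ℂ, h z = a * z + b :=
  ⟨norm ⁻¹' nonLocallyConstantSet cantorFunction,
    isCompact_norm_preimage (isCompact_Icc.of_isClosed_subset
      (isClosed_nonLocallyConstantSet _) cantorFunction.nonLocallyConstantSet_subset_Icc),
    Complex.volume_norm_preimage_eq_zero cantorFunction.volume_nonLocallyConstantSet,
    radialTwist cantorFunction cantorFunction.continuous,
    fun _ hz => differentiableAt_radialTwist _ hz,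
    not_exists_radialTwist_cantorFunction_eq_affine⟩
end
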